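/- Let 0 < p < 1, q = 1 − p, f(t) = q e^{−itp} + p e^{itq}, and β₃(p) = E|X − p|³ = pq(p² + q²) the third absolute central moment of the Bernoulli(p) variable X. Then for all real t, |f(t) − e^{−pqt²/2}| ≤ (|t|³/6)·β₃(p) + (t⁴/8)·(pq)². -/

import Mathlib

/-!
Expand both exponentials of `f` to second order. The first-order terms cancel because `X - p` is
centred, the second-order terms add up to `-pqt²/2`, and the third-order remainders, each at most
`|y|³/6`, contribute at most `(|t|³/6) β₃(p)`. What is left is the gap between `1 - pqt²/2` and
`exp (-pqt²/2)`, which the alternating Taylor bound `|e^{-x} - (1 - x)| ≤ x²/2` controls.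
-/

open Complex ComplexConjugate Finset Nat

namespace Complex

lemma hasDerivAt_exp_I_mul_sub_sum (n : ℕ) (x : ℝ) :
    HasDerivAt (fun s : ℝ => exp (I * s) - ∑ k ∈ range (n + 1), (I * s) ^ k / k !)
      (I * (exp (I * x) - ∑ k ∈ range n, (I * x) ^ k / (k ! : ℂ))) x := by
  have hlin : HasDerivAt (fun s : ℝ => I * s) I x := by
    simpa using (ofRealCLM.hasDerivAt (x := x)).const_mul I
  have hexp : HasDerivAt (fun s : ℝ => exp (I * s)) (I * exp (I * x)) x := by
    simpa [mul_comm] using hlin.cexp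
  have hterm (k : ℕ) : HasDerivAt (fun s : ℝ => (I * s) ^ (k + 1) / (k + 1 : ℕ)!)
      (I * ((I * x) ^ k / k !)) x := by
    refine ((hlin.pow (k + 1)).div_const _).congr_deriv ?_
    push_cast [Nat.factorial_succ, Nat.add_sub_cancel]
    field_simp
  have hshift : (fun s : ℝ => exp (I * s) - ∑ k ∈ range (n + 1), (I * s) ^ k / k !) =
      fun s : ℝ => exp (I * s) - (∑ k ∈ range n, (I * s) ^ (k + 1) / (k + 1 : ℕ)! + 1) := by
    simp [sum_range_succ']
  rw [hshift]
  exact (hexp.sub ((HasDerivAt.fun_sum fun k _ => hterm k).add_const 1)).congr_deriv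
    (by simp [mul_sub, mul_sum])

lemma norm_exp_I_mul_sub_sum_le_of_nonneg (n : ℕ) {x : ℝ} (hx : 0 ≤ x) :
    ‖exp (I * x) - ∑ k ∈ range n, (I * x) ^ k / (k ! : ℂ)‖ ≤ x ^ n / n ! := by
  induction n generalizing x with
  | zero => simp [norm_exp_I_mul_ofReal]
  | succ n ih =>
    refine image_norm_le_of_norm_deriv_right_le_deriv_boundary (a := 0) (b := x)
      (B := fun s => s ^ (n + 1) / (n + 1)!) (B' := fun s => s ^ n / n !) (by fun_prop)
      (fun s _ => (hasDerivAt_exp_I_mul_sub_sum n s).hasDerivWithinAt) (by simp [sum_range_succ'])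
      (fun s => ?_) (fun s hs => ?_) ⟨hx, le_rfl⟩
    · refine ((hasDerivAt_pow (n + 1) s).div_const _).congr_deriv ?_
      push_cast [Nat.factorial_succ, Nat.add_sub_cancel]
      field_simp
    · simpa using ih hs.1

theorem norm_exp_I_mul_sub_sum_le (n : ℕ) (x : ℝ) :
    ‖exp (I * x) - ∑ k ∈ range n, (I * x) ^ k / (k ! : ℂ)‖ ≤ |x| ^ n / n ! := by
  rcases le_total 0 x with hx | hx
  · simpa [abs_of_nonneg hx] using norm_exp_I_mul_sub_sum_le_of_nonneg n hx
  · have hconj : exp (I * x) - ∑ k ∈ range n, (I * x) ^ k / (k ! : ℂ) =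
        conj (exp (I * (-x : ℝ)) - ∑ k ∈ range n, (I * (-x : ℝ)) ^ k / (k ! : ℂ)) := by
      simp [map_sum, ← exp_conj]
    rw [hconj, RCLike.norm_conj, abs_of_nonpos hx]
    exact norm_exp_I_mul_sub_sum_le_of_nonneg n (neg_nonneg.2 hx)

end Complex

namespace Real

lemma exp_neg_le_one_sub_add_sq_div_two {x : ℝ} (hx : 0 ≤ x) :
    exp (-x) ≤ 1 - x + x ^ 2 / 2 := by
  rw [exp_neg, inv_le_iff_one_le_mul₀ (exp_pos x)]
  calc (1 : ℝ) ≤ (1 - x + x ^ 2 / 2) * (1 + x + x ^ 2 / 2) := by nlinarith [pow_nonneg hx 4]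
    _ ≤ (1 - x + x ^ 2 / 2) * exp x := by
      gcongr
      · nlinarith [sq_nonneg (x - 1)]
      · exact quadratic_le_exp_of_nonneg hx

lemma abs_exp_neg_sub_one_sub_le {x : ℝ} (hx : 0 ≤ x) :
    |exp (-x) - (1 - x)| ≤ x ^ 2 / 2 := by
  rw [abs_le]
  constructor <;> linarith [one_sub_le_exp_neg x, exp_neg_le_one_sub_add_sq_div_two hx]

end Real

theorem norm_centered_bernoulli_charFun_sub_quadratic_le {p : ℝ} (hp0 : 0 ≤ p) (hp1 : p ≤ 1)
    (t : ℝ) :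
    ‖(1 - p : ℂ) * exp (-I * t * p) + p * exp (I * t * (1 - p)) -
        ((1 - p * (1 - p) * t ^ 2 / 2 : ℝ) : ℂ)‖ ≤
      |t| ^ 3 / 6 * (p * (1 - p) * (p ^ 2 + (1 - p) ^ 2)) := by
  set R : ℝ → ℂ := fun y => exp (I * y) - ∑ k ∈ range 3, (I * y) ^ k / (k ! : ℂ)
  have hR (y : ℝ) : ‖R y‖ ≤ |y| ^ 3 / 6 := by
    simpa [Nat.factorial] using norm_exp_I_mul_sub_sum_le 3 y
  have hdecomp : (1 - p : ℂ) * exp (-I * t * p) + p * exp (I * t * (1 - p)) -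
      ((1 - p * (1 - p) * t ^ 2 / 2 : ℝ) : ℂ) =
      ((1 - p : ℝ) : ℂ) * R (-(t * p)) + (p : ℂ) * R (t * (1 - p)) := by
    simp only [R, sum_range_succ, sum_range_zero]
    push_cast
    ring_nf
    rw [I_sq]
    ring
  calc _ ≤ (1 - p) * ‖R (-(t * p))‖ + p * ‖R (t * (1 - p))‖ := by
        rw [hdecomp]
        refine (norm_add_le _ _).trans_eq ?_
        rw [norm_mul, norm_mul, norm_real, norm_real, Real.norm_of_nonneg (by linarith),
          Real.norm_of_nonneg hp0]
    _ ≤ (1 - p) * (|-(t * p)| ^ 3 / 6) + p * (|t * (1 - p)| ^ 3 / 6) := by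
        gcongr <;> exact hR _
    _ = _ := by
        rw [abs_neg, abs_mul, abs_mul, abs_of_nonneg hp0, abs_of_nonneg (sub_nonneg.2 hp1)]
        ring

theorem charfun_minus_gaussian_bound (p : ℝ) (hp : p ∈ Set.Ioo (0 : ℝ) 1)
    (f : ℝ → ℂ)
    (hf : ∀ t : ℝ, f t =
      (1 - p : ℂ) * Complex.exp (-Complex.I * t * p) +
        (p : ℂ) * Complex.exp (Complex.I * t * (1 - p)))
    (t : ℝ) :
    ‖f t - (Real.exp (-(p * (1 - p) * t ^ 2) / 2) : ℂ)‖ ≤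
      (|t| ^ 3 / 6) * (p * (1 - p) * (p ^ 2 + (1 - p) ^ 2)) +
        (t ^ 4 / 8) * (p * (1 - p)) ^ 2 := by
  obtain ⟨hp0, hp1⟩ := hp
  set x := p * (1 - p) * t ^ 2 / 2
  have hx : 0 ≤ x := by
    have := sub_nonneg.2 hp1.le
    positivity
  have hgauss : ‖((1 - x : ℝ) : ℂ) - (Real.exp (-(p * (1 - p) * t ^ 2) / 2) : ℂ)‖ ≤
      t ^ 4 / 8 * (p * (1 - p)) ^ 2 := by
    rw [← ofReal_sub, norm_real, Real.norm_eq_abs, abs_sub_comm, neg_div]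
    exact (Real.abs_exp_neg_sub_one_sub_le hx).trans_eq (by ring)
  calc _ ≤ ‖f t - ((1 - x : ℝ) : ℂ)‖ +
        ‖((1 - x : ℝ) : ℂ) - (Real.exp (-(p * (1 - p) * t ^ 2) / 2) : ℂ)‖ :=
        norm_sub_le_norm_sub_add_norm_sub _ _ _
    _ ≤ _ := add_le_add
        (hf t ▸ norm_centered_bernoulli_charFun_sub_quadratic_le hp0.le hp1.le t) hgauss
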